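/- arXiv:2305.18040 — 2 statements merged into one kernel-verified Lean document; each statement's English description precedes it below -/
import Mathlib

section
/- Assume in addition that 0 < |H|², |H|² ≠ γp, H·ξ ≠ 0 and ξ×H ≠ 0. Then for every τ ∈ ℝ one has det p₂(τ,ξ) = 0 if and only if exactly one of the three conditions ρτ² = (H·ξ)², τ² = c_s²(ξ), τ² = c_f²(ξ) holds; in particular no two of these conditions can hold simultaneously (the Shear Alfvén, slow magnetosonic and fast magnetosonic characteristic varieties are pairwise disjoint). -/
open Matrix

noncomputable section

/-- Euclidean dot product on `ℝ³`. -/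
def dot3 (a b : Fin 3 → ℝ) : ℝ := a 0 * b 0 + a 1 * b 1 + a 2 * b 2

/-- Cross product on `ℝ³`. -/
def cross3 (a b : Fin 3 → ℝ) : Fin 3 → ℝ :=
  ![a 1 * b 2 - a 2 * b 1, a 2 * b 0 - a 0 * b 2, a 0 * b 1 - a 1 * b 0]

/-- The sound speed squared `c² = γp/ρ`. -/
def csq (ρ γ p : ℝ) : ℝ := γ * p / ρ

/-- The Alfvén speed squared `h² = |H|²/ρ`. -/
def hsq (ρ : ℝ) (H : Fin 3 → ℝ) : ℝ := dot3 H H / ρ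

/-- `b²(ξ) = |ξ×H|²/ρ`. -/
def bsq (ρ : ℝ) (H ξ : Fin 3 → ℝ) : ℝ := dot3 (cross3 ξ H) (cross3 ξ H) / ρ

/-- The slow magnetosonic speed squared `c_s²(ξ)`. -/
def cs2 (ρ γ p : ℝ) (H ξ : Fin 3 → ℝ) : ℝ :=
  ((csq ρ γ p + hsq ρ H) * dot3 ξ ξ
    - Real.sqrt ((csq ρ γ p - hsq ρ H) ^ 2 * (dot3 ξ ξ) ^ 2
        + 4 * bsq ρ H ξ * csq ρ γ p * dot3 ξ ξ)) / 2

/-- The fast magnetosonic speed squared `c_f²(ξ)`. -/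
def cf2 (ρ γ p : ℝ) (H ξ : Fin 3 → ℝ) : ℝ :=
  ((csq ρ γ p + hsq ρ H) * dot3 ξ ξ
    + Real.sqrt ((csq ρ γ p - hsq ρ H) ^ 2 * (dot3 ξ ξ) ^ 2
        + 4 * bsq ρ H ξ * csq ρ γ p * dot3 ξ ξ)) / 2

/-- The principal symbol `p₂(τ,ξ)` of the ideal MHD wave operator. -/
def p2 (ρ γ p τ : ℝ) (H ξ : Fin 3 → ℝ) : Matrix (Fin 3) (Fin 3) ℝ :=
  (ρ * τ ^ 2 - (dot3 H ξ) ^ 2) • (1 : Matrix (Fin 3) (Fin 3) ℝ)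
    - (γ * p + dot3 H H) • vecMulVec ξ ξ
    + (dot3 H ξ) • (vecMulVec ξ H + vecMulVec H ξ)

set_option maxHeartbeats 2000000 in
lemma detaux (R g P t h0 h1 h2 x0 x1 x2 : ℝ) :
    (Matrix.of ![
      ![(R*t^2 - (h0*x0+h1*x1+h2*x2)^2)*1 - (g*P + (h0*h0+h1*h1+h2*h2))*(x0*x0) + (h0*x0+h1*x1+h2*x2)*(x0*h0 + h0*x0),
        (R*t^2 - (h0*x0+h1*x1+h2*x2)^2)*0 - (g*P + (h0*h0+h1*h1+h2*h2))*(x0*x1) + (h0*x0+h1*x1+h2*x2)*(x0*h1 + h0*x1),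
        (R*t^2 - (h0*x0+h1*x1+h2*x2)^2)*0 - (g*P + (h0*h0+h1*h1+h2*h2))*(x0*x2) + (h0*x0+h1*x1+h2*x2)*(x0*h2 + h0*x2)],
      ![(R*t^2 - (h0*x0+h1*x1+h2*x2)^2)*0 - (g*P + (h0*h0+h1*h1+h2*h2))*(x1*x0) + (h0*x0+h1*x1+h2*x2)*(x1*h0 + h1*x0),
        (R*t^2 - (h0*x0+h1*x1+h2*x2)^2)*1 - (g*P + (h0*h0+h1*h1+h2*h2))*(x1*x1) + (h0*x0+h1*x1+h2*x2)*(x1*h1 + h1*x1),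
        (R*t^2 - (h0*x0+h1*x1+h2*x2)^2)*0 - (g*P + (h0*h0+h1*h1+h2*h2))*(x1*x2) + (h0*x0+h1*x1+h2*x2)*(x1*h2 + h1*x2)],
      ![(R*t^2 - (h0*x0+h1*x1+h2*x2)^2)*0 - (g*P + (h0*h0+h1*h1+h2*h2))*(x2*x0) + (h0*x0+h1*x1+h2*x2)*(x2*h0 + h2*x0),
        (R*t^2 - (h0*x0+h1*x1+h2*x2)^2)*0 - (g*P + (h0*h0+h1*h1+h2*h2))*(x2*x1) + (h0*x0+h1*x1+h2*x2)*(x2*h1 + h2*x1),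
        (R*t^2 - (h0*x0+h1*x1+h2*x2)^2)*1 - (g*P + (h0*h0+h1*h1+h2*h2))*(x2*x2) + (h0*x0+h1*x1+h2*x2)*(x2*h2 + h2*x2)]]).det
    = (R*t^2 - (h0*x0+h1*x1+h2*x2)^2) *
      (R^2*t^4 - R*(g*P + (h0*h0+h1*h1+h2*h2))*(x0*x0+x1*x1+x2*x2)*t^2
        + g*P*(h0*x0+h1*x1+h2*x2)^2*(x0*x0+x1*x1+x2*x2)) := by
  rw [Matrix.det_fin_three]
  simp only [Matrix.of_apply, Matrix.cons_val', Matrix.cons_val_zero, Matrix.cons_val_one,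
    Matrix.head_cons, Matrix.head_fin_const, Matrix.cons_val_fin_one, Matrix.empty_val',
    Matrix.cons_val_two, Matrix.tail_cons]
  ring

set_option maxHeartbeats 1000000 in
lemma det_p2 (ρ γ p τ : ℝ) (H ξ : Fin 3 → ℝ) :
    (p2 ρ γ p τ H ξ).det = (ρ * τ ^ 2 - (dot3 H ξ) ^ 2) *
      (ρ ^ 2 * τ ^ 4 - ρ * (γ * p + dot3 H H) * dot3 ξ ξ * τ ^ 2
        + γ * p * (dot3 H ξ) ^ 2 * dot3 ξ ξ) := by
  have hM : p2 ρ γ p τ H ξ = Matrix.of ![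
      ![(ρ*τ^2 - (H 0*ξ 0+H 1*ξ 1+H 2*ξ 2)^2)*1 - (γ*p + (H 0*H 0+H 1*H 1+H 2*H 2))*(ξ 0*ξ 0) + (H 0*ξ 0+H 1*ξ 1+H 2*ξ 2)*(ξ 0*H 0 + H 0*ξ 0),
        (ρ*τ^2 - (H 0*ξ 0+H 1*ξ 1+H 2*ξ 2)^2)*0 - (γ*p + (H 0*H 0+H 1*H 1+H 2*H 2))*(ξ 0*ξ 1) + (H 0*ξ 0+H 1*ξ 1+H 2*ξ 2)*(ξ 0*H 1 + H 0*ξ 1),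
        (ρ*τ^2 - (H 0*ξ 0+H 1*ξ 1+H 2*ξ 2)^2)*0 - (γ*p + (H 0*H 0+H 1*H 1+H 2*H 2))*(ξ 0*ξ 2) + (H 0*ξ 0+H 1*ξ 1+H 2*ξ 2)*(ξ 0*H 2 + H 0*ξ 2)],
      ![(ρ*τ^2 - (H 0*ξ 0+H 1*ξ 1+H 2*ξ 2)^2)*0 - (γ*p + (H 0*H 0+H 1*H 1+H 2*H 2))*(ξ 1*ξ 0) + (H 0*ξ 0+H 1*ξ 1+H 2*ξ 2)*(ξ 1*H 0 + H 1*ξ 0),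
        (ρ*τ^2 - (H 0*ξ 0+H 1*ξ 1+H 2*ξ 2)^2)*1 - (γ*p + (H 0*H 0+H 1*H 1+H 2*H 2))*(ξ 1*ξ 1) + (H 0*ξ 0+H 1*ξ 1+H 2*ξ 2)*(ξ 1*H 1 + H 1*ξ 1),
        (ρ*τ^2 - (H 0*ξ 0+H 1*ξ 1+H 2*ξ 2)^2)*0 - (γ*p + (H 0*H 0+H 1*H 1+H 2*H 2))*(ξ 1*ξ 2) + (H 0*ξ 0+H 1*ξ 1+H 2*ξ 2)*(ξ 1*H 2 + H 1*ξ 2)],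
      ![(ρ*τ^2 - (H 0*ξ 0+H 1*ξ 1+H 2*ξ 2)^2)*0 - (γ*p + (H 0*H 0+H 1*H 1+H 2*H 2))*(ξ 2*ξ 0) + (H 0*ξ 0+H 1*ξ 1+H 2*ξ 2)*(ξ 2*H 0 + H 2*ξ 0),
        (ρ*τ^2 - (H 0*ξ 0+H 1*ξ 1+H 2*ξ 2)^2)*0 - (γ*p + (H 0*H 0+H 1*H 1+H 2*H 2))*(ξ 2*ξ 1) + (H 0*ξ 0+H 1*ξ 1+H 2*ξ 2)*(ξ 2*H 1 + H 2*ξ 1),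
        (ρ*τ^2 - (H 0*ξ 0+H 1*ξ 1+H 2*ξ 2)^2)*1 - (γ*p + (H 0*H 0+H 1*H 1+H 2*H 2))*(ξ 2*ξ 2) + (H 0*ξ 0+H 1*ξ 1+H 2*ξ 2)*(ξ 2*H 2 + H 2*ξ 2)]] := by
    ext i j
    fin_cases i <;> fin_cases j <;>
      simp [p2, dot3, Matrix.one_apply, vecMulVec_apply] <;> ring
  rw [hM, detaux]
  simp only [dot3]

lemma dot3_self_pos (v : Fin 3 → ℝ) (hv : v ≠ 0) : 0 < dot3 v v := by
  rcases lt_or_ge 0 (dot3 v v) with h | h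
  · exact h
  · exfalso
    apply hv
    have h0 := mul_self_nonneg (v 0)
    have h1 := mul_self_nonneg (v 1)
    have h2 := mul_self_nonneg (v 2)
    unfold dot3 at h
    have e0 : v 0 = 0 := mul_self_eq_zero.mp (le_antisymm (by nlinarith) h0)
    have e1 : v 1 = 0 := mul_self_eq_zero.mp (le_antisymm (by nlinarith) h1)
    have e2 : v 2 = 0 := mul_self_eq_zero.mp (le_antisymm (by nlinarith) h2)
    funext i
    fin_cases i <;> simp [e0, e1, e2]

lemma quadfac (ρ T a gp m s S CS CF : ℝ)
    (h1 : 2*ρ*CS = (gp+m)*s - ρ*S) (h2 : 2*ρ*CF = (gp+m)*s + ρ*S)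
    (h3 : ρ^2*S^2 = (gp-m)^2*s^2 + 4*(s*m-a^2)*gp*s) :
    ρ^2*T^2 - ρ*(gp+m)*s*T + gp*a^2*s = ρ^2*(T-CS)*(T-CF) := by
  linear_combination (T*ρ/2 - ρ*CF/2) * h1 + (T*ρ/2 - ((gp+m)*s - ρ*S)/4) * h2 + (1/4) * h3

lemma gapaux (ρ a gp m s S CS CF : ℝ)
    (h1 : 2*ρ*CS = (gp+m)*s - ρ*S) (h2 : 2*ρ*CF = (gp+m)*s + ρ*S)
    (h3 : ρ^2*S^2 = (gp-m)^2*s^2 + 4*(s*m-a^2)*gp*s) :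
    (a^2 - ρ*CS)*(a^2 - ρ*CF) = a^2*(a^2 - s*m) := by
  linear_combination ((ρ*CF - a^2)/2) * h1 + ((gp+m)*s/4 - ρ*S/4 - a^2/2) * h2 - (1/4) * h3

set_option maxHeartbeats 1000000 in
/-- Under `0 < |H|²`, `|H|² ≠ γp` (i.e. `|H|² ≠ ρc²`), `H·ξ ≠ 0`, `ξ×H ≠ 0`:
`det p₂(τ,ξ) = 0` iff exactly one of `ρτ² = (H·ξ)²`, `τ² = c_s²(ξ)`,
`τ² = c_f²(ξ)` holds, and no two of these conditions hold simultaneously. -/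
theorem stmt3 (ρ γ p : ℝ) (H ξ : Fin 3 → ℝ)
    (hρ : 0 < ρ) (hγp : 0 < γ * p)
    (hH : 0 < dot3 H H) (hHne : dot3 H H ≠ γ * p)
    (hHξ : dot3 H ξ ≠ 0) (hcross : cross3 ξ H ≠ 0) :
    ∀ τ : ℝ,
      ((p2 ρ γ p τ H ξ).det = 0 ↔
        ((ρ * τ ^ 2 = (dot3 H ξ) ^ 2 ∧ τ ^ 2 ≠ cs2 ρ γ p H ξ ∧ τ ^ 2 ≠ cf2 ρ γ p H ξ) ∨
         (ρ * τ ^ 2 ≠ (dot3 H ξ) ^ 2 ∧ τ ^ 2 = cs2 ρ γ p H ξ ∧ τ ^ 2 ≠ cf2 ρ γ p H ξ) ∨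
         (ρ * τ ^ 2 ≠ (dot3 H ξ) ^ 2 ∧ τ ^ 2 ≠ cs2 ρ γ p H ξ ∧ τ ^ 2 = cf2 ρ γ p H ξ))) ∧
      ¬(ρ * τ ^ 2 = (dot3 H ξ) ^ 2 ∧ τ ^ 2 = cs2 ρ γ p H ξ) ∧
      ¬(ρ * τ ^ 2 = (dot3 H ξ) ^ 2 ∧ τ ^ 2 = cf2 ρ γ p H ξ) ∧
      ¬(τ ^ 2 = cs2 ρ γ p H ξ ∧ τ ^ 2 = cf2 ρ γ p H ξ) := by
  intro τ
  have hρ0 : ρ ≠ 0 := ne_of_gt hρ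
  set b := dot3 (cross3 ξ H) (cross3 ξ H) with hbb
  set a := dot3 H ξ with ha
  set m := dot3 H H with hm
  set s := dot3 ξ ξ with hss
  set CS := cs2 ρ γ p H ξ with hCSdef
  set CF := cf2 ρ γ p H ξ with hCFdef
  have hb : 0 < b := dot3_self_pos _ hcross
  have hlag : b = s*m - a^2 := by
    rw [hbb, ha, hm, hss]; simp [dot3, cross3]; ring
  have hs : 0 < s := by nlinarith [sq_nonneg a]
  set D := (γ*p/ρ - m/ρ)^2*s^2 + 4*(b/ρ)*(γ*p/ρ)*s with hDdef
  have hD : 0 < D := by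
    rw [hDdef]
    have h1 : 0 ≤ (γ*p/ρ - m/ρ)^2*s^2 := mul_nonneg (sq_nonneg _) (sq_nonneg _)
    have h2 : 0 < 4*(b/ρ)*(γ*p/ρ)*s :=
      mul_pos (mul_pos (mul_pos four_pos (div_pos hb hρ)) (div_pos hγp hρ)) hs
    linarith
  set S := Real.sqrt D with hSdef
  have hS2 : S^2 = D := Real.sq_sqrt hD.le
  have hSpos : 0 < S := Real.sqrt_pos.mpr hD
  have hCS : CS = ((γ*p/ρ + m/ρ)*s - S)/2 := by
    rw [hCSdef, hSdef, hDdef, hm, hss, hbb]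
    simp only [cs2, csq, hsq, bsq]
  have hCF : CF = ((γ*p/ρ + m/ρ)*s + S)/2 := by
    rw [hCFdef, hSdef, hDdef, hm, hss, hbb]
    simp only [cf2, csq, hsq, bsq]
  clear_value S D CS CF s m a b
  have hCSρ : 2*ρ*CS = (γ*p+m)*s - ρ*S := by rw [hCS]; field_simp
  have hCFρ : 2*ρ*CF = (γ*p+m)*s + ρ*S := by rw [hCF]; field_simp
  have hS2ρ : ρ^2*S^2 = (γ*p-m)^2*s^2 + 4*(s*m-a^2)*(γ*p)*s := by
    rw [hS2, hDdef, hlag]; field_simp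
  have hq := quadfac ρ (τ^2) a (γ*p) m s S CS CF hCSρ hCFρ hS2ρ
  have hdet : (p2 ρ γ p τ H ξ).det
      = (ρ*τ^2 - a^2)*(ρ^2*τ^4 - ρ*(γ*p+m)*s*τ^2 + γ*p*a^2*s) := by
    rw [ha, hm, hss]; exact det_p2 ρ γ p τ H ξ
  have hfact : (p2 ρ γ p τ H ξ).det
      = ρ^2*(ρ*τ^2 - a^2)*((τ^2 - CS)*(τ^2 - CF)) := by
    rw [hdet]; linear_combination (ρ*τ^2 - a^2) * hq
  have hgapeq : (a^2 - ρ*CS)*(a^2 - ρ*CF) = a^2*(a^2 - s*m) :=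
    gapaux ρ a (γ*p) m s S CS CF hCSρ hCFρ hS2ρ
  have ha2 : 0 < a^2 := pow_pos (abs_pos.mpr hHξ) 2 |>.trans_eq (by rw [sq_abs])
  have hgap : (a^2 - ρ*CS)*(a^2 - ρ*CF) < 0 := by
    rw [hgapeq]
    exact mul_neg_of_pos_of_neg ha2 (by linarith)
  have hACS : ρ*CS ≠ a^2 := by
    intro h; rw [h] at hgap; simp at hgap
  have hACF : ρ*CF ≠ a^2 := by
    intro h; rw [h] at hgap; simp at hgap
  have hCSCF : CS ≠ CF := by
    intro h; rw [h] at hCSρ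
    nlinarith [mul_pos hρ hSpos]
  have eAS : ρ*τ^2 = a^2 → τ^2 ≠ CS := by
    intro h1 h2 ; exact hACS (by rw [← h2]; exact h1)
  have eAF : ρ*τ^2 = a^2 → τ^2 ≠ CF := by
    intro h1 h2 ; exact hACF (by rw [← h2]; exact h1)
  have eSF : τ^2 = CS → τ^2 ≠ CF := by
    intro h1 h2 ; exact hCSCF (h1.symm.trans h2)
  have hdet0 : (p2 ρ γ p τ H ξ).det = 0 ↔ (ρ*τ^2 = a^2 ∨ τ^2 = CS ∨ τ^2 = CF) := by
    rw [hfact]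
    constructor
    · intro h
      rcases mul_eq_zero.mp h with h' | h'
      · rcases mul_eq_zero.mp h' with h'' | h''
        · exact absurd h'' (pow_ne_zero 2 hρ0)
        · exact Or.inl (by linarith [sub_eq_zero.mp h''])
      · rcases mul_eq_zero.mp h' with h'' | h''
        · exact Or.inr (Or.inl (by linarith [sub_eq_zero.mp h'']))
        · exact Or.inr (Or.inr (by linarith [sub_eq_zero.mp h'']))
    · rintro (h | h | h)
      · have h0 : ρ*τ^2 - a^2 = 0 := by linarith
        rw [h0]; ring
      · have h0 : τ^2 - CS = 0 := by linarith
        rw [h0]; ring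
      · have h0 : τ^2 - CF = 0 := by linarith
        rw [h0]; ring
  refine ⟨?_, fun h => eAS h.1 h.2, fun h => eAF h.1 h.2, fun h => eSF h.1 h.2⟩
  rw [hdet0]
  constructor
  · rintro (h | h | h)
    · exact Or.inl ⟨h, eAS h, eAF h⟩
    · exact Or.inr (Or.inl ⟨fun h' => eAS h' h, h, eSF h⟩)
    · exact Or.inr (Or.inr ⟨fun h' => eAF h' h, fun h' => eSF h' h, h⟩)
  · rintro (⟨h,_,_⟩ | ⟨_,h,_⟩ | ⟨_,_,h⟩)
    · exact Or.inl h
    · exact Or.inr (Or.inl h)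
    · exact Or.inr (Or.inr h)
end
end

section
/- For every τ ∈ ℝ and ξ ∈ ℝ³, setting q₁ = ρτ² − (H·ξ)² and Q = ρ²τ⁴ − ρ(γp+|H|²)|ξ|²τ² + γp(H·ξ)²|ξ|², one has the 3×3 matrix identity [ Q·Id₃ + q₁·((γp+|H|²)(ξ⊗ξ) − (H·ξ)(ξ⊗H + H⊗ξ)) + (H·ξ)²·w²(ξ) ] · p₂(τ,ξ) = q₁·Q·Id₃, i.e. the bracketed matrix times p₂(τ,ξ) equals det p₂(τ,ξ) times the identity. -/
open Matrix

noncomputable section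

/-- `w²(ξ) = |H|²·(ξ⊗ξ) + |ξ|²·(H⊗H) − (H·ξ)·(H⊗ξ + ξ⊗H)`. -/
def w2 (H ξ : Fin 3 → ℝ) : Matrix (Fin 3) (Fin 3) ℝ :=
  (dot3 H H) • vecMulVec ξ ξ + (dot3 ξ ξ) • vecMulVec H H
    - (dot3 H ξ) • (vecMulVec H ξ + vecMulVec ξ H)

/-! Products of rank-one matrices are governed by the Gram matrix of their vectors:
`(u vᵀ)(w xᵀ) = (v·w) u xᵀ`. Hence both sides of the identity are linear combinations of
`1, ξξᵀ, ξHᵀ, Hξᵀ, HHᵀ` whose coefficients are polynomials in `|H|², |ξ|², H·ξ`, and the identity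
reduces to comparing these coefficients. It therefore holds in every dimension and over every
commutative ring, with `s` in place of `γp`. -/

theorem dot3_eq_dotProduct (a b : Fin 3 → ℝ) : dot3 a b = a ⬝ᵥ b := by
  simp [dot3, dotProduct, Fin.sum_univ_three]

section

variable {R n : Type*} [CommRing R] [Fintype n]

theorem vecMulVec_mul_vecMulVec_eq_smul (u v w x : n → R) :
    vecMulVec u v * vecMulVec w x = (v ⬝ᵥ w) • vecMulVec u x := by
  rw [vecMulVec_mul_vecMulVec, vecMulVec_smul]

variable [DecidableEq n]

def mhdSymbol (s ρ τ : R) (H ξ : n → R) : Matrix n n R :=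
  (ρ * τ ^ 2 - (H ⬝ᵥ ξ) ^ 2) • (1 : Matrix n n R) - (s + H ⬝ᵥ H) • vecMulVec ξ ξ
    + (H ⬝ᵥ ξ) • (vecMulVec ξ H + vecMulVec H ξ)

def mhdCofactor (s ρ τ : R) (H ξ : n → R) : Matrix n n R :=
  (ρ ^ 2 * τ ^ 4 - ρ * (s + H ⬝ᵥ H) * (ξ ⬝ᵥ ξ) * τ ^ 2
      + s * (H ⬝ᵥ ξ) ^ 2 * (ξ ⬝ᵥ ξ)) • (1 : Matrix n n R)
    + (ρ * τ ^ 2 - (H ⬝ᵥ ξ) ^ 2) •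
        ((s + H ⬝ᵥ H) • vecMulVec ξ ξ - (H ⬝ᵥ ξ) • (vecMulVec ξ H + vecMulVec H ξ))
    + (H ⬝ᵥ ξ) ^ 2 • ((H ⬝ᵥ H) • vecMulVec ξ ξ + (ξ ⬝ᵥ ξ) • vecMulVec H H
      - (H ⬝ᵥ ξ) • (vecMulVec H ξ + vecMulVec ξ H))

theorem mhdCofactor_mul_mhdSymbol (s ρ τ : R) (H ξ : n → R) :
    mhdCofactor s ρ τ H ξ * mhdSymbol s ρ τ H ξ
      = ((ρ * τ ^ 2 - (H ⬝ᵥ ξ) ^ 2)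
          * (ρ ^ 2 * τ ^ 4 - ρ * (s + H ⬝ᵥ H) * (ξ ⬝ᵥ ξ) * τ ^ 2
              + s * (H ⬝ᵥ ξ) ^ 2 * (ξ ⬝ᵥ ξ))) • (1 : Matrix n n R) := by
  simp only [mhdCofactor, mhdSymbol, add_mul, mul_add, sub_mul, mul_sub, smul_mul_smul_comm,
    Matrix.smul_mul, Matrix.one_mul, Matrix.mul_one, vecMulVec_mul_vecMulVec_eq_smul,
    dotProduct_comm ξ H]
  module

end

theorem stmt4_general (ρ γ p : ℝ) (H : Fin 3 → ℝ) :
    ∀ (τ : ℝ) (ξ : Fin 3 → ℝ),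
      ((ρ ^ 2 * τ ^ 4 - ρ * (γ * p + dot3 H H) * dot3 ξ ξ * τ ^ 2
            + γ * p * (dot3 H ξ) ^ 2 * dot3 ξ ξ) • (1 : Matrix (Fin 3) (Fin 3) ℝ)
          + (ρ * τ ^ 2 - (dot3 H ξ) ^ 2) •
              ((γ * p + dot3 H H) • vecMulVec ξ ξ
                - (dot3 H ξ) • (vecMulVec ξ H + vecMulVec H ξ))
          + (dot3 H ξ) ^ 2 • w2 H ξ) * p2 ρ γ p τ H ξ
        = ((ρ * τ ^ 2 - (dot3 H ξ) ^ 2)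
            * (ρ ^ 2 * τ ^ 4 - ρ * (γ * p + dot3 H H) * dot3 ξ ξ * τ ^ 2
                + γ * p * (dot3 H ξ) ^ 2 * dot3 ξ ξ)) • (1 : Matrix (Fin 3) (Fin 3) ℝ) := by
  intro τ ξ
  simpa only [mhdCofactor, mhdSymbol, w2, p2, dot3_eq_dotProduct] using
    mhdCofactor_mul_mhdSymbol (γ * p) ρ τ H ξ

/-- With `q₁ = ρτ² − (H·ξ)²` and
`Q = ρ²τ⁴ − ρ(γp+|H|²)|ξ|²τ² + γp(H·ξ)²|ξ|²`, one has
`[Q·Id₃ + q₁·((γp+|H|²)(ξ⊗ξ) − (H·ξ)(ξ⊗H + H⊗ξ)) + (H·ξ)²·w²(ξ)] · p₂(τ,ξ)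
  = q₁·Q·Id₃`. -/
theorem stmt4 (ρ γ p : ℝ) (H : Fin 3 → ℝ) (hρ : 0 < ρ) (hγp : 0 < γ * p) :
    ∀ (τ : ℝ) (ξ : Fin 3 → ℝ),
      ((ρ ^ 2 * τ ^ 4 - ρ * (γ * p + dot3 H H) * dot3 ξ ξ * τ ^ 2
            + γ * p * (dot3 H ξ) ^ 2 * dot3 ξ ξ) • (1 : Matrix (Fin 3) (Fin 3) ℝ)
          + (ρ * τ ^ 2 - (dot3 H ξ) ^ 2) •
              ((γ * p + dot3 H H) • vecMulVec ξ ξ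
                - (dot3 H ξ) • (vecMulVec ξ H + vecMulVec H ξ))
          + (dot3 H ξ) ^ 2 • w2 H ξ) * p2 ρ γ p τ H ξ
        = ((ρ * τ ^ 2 - (dot3 H ξ) ^ 2)
            * (ρ ^ 2 * τ ^ 4 - ρ * (γ * p + dot3 H H) * dot3 ξ ξ * τ ^ 2
                + γ * p * (dot3 H ξ) ^ 2 * dot3 ξ ξ)) • (1 : Matrix (Fin 3) (Fin 3) ℝ) :=
  stmt4_general ρ γ p H
end
end
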